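/- (Telescoping lemma, finite-state version) Let M and M̂ be two MDPs sharing state space S, action space A, reward functions R, R̂ : S×A → ℝ, transition kernels T, T̂, and discount γ ∈ [0,1). Fix a policy π and define G(s,a) = E_{s'∼T̂(·|s,a)}[γ V_M^π(s')] + R̂(s,a) − E_{s'∼T(·|s,a)}[γ V_M^π(s')] − R(s,a), where V_M^π is the value function of π in M. Then E_{(s,a)∼ρ_{T̂}^π}[G(s,a)] = η_{M̂}(π) − η_M(π), where ρ_{T̂}^π is the (normalized by 1−γ appropriately) discounted state-action occupancy of π under T̂ and η denotes expected discounted return from the initial distribution. -/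

import Mathlib

open Finset

variable {S A : Type*} [Fintype S] [Fintype A]

/-- State distribution at time `t` of the Markov chain induced by policy `π`
and transition kernel `T`, started from initial distribution `μ`. -/
noncomputable def stateDist (T : S → A → S → ℝ) (π : S → A → ℝ)
    (μ : S → ℝ) : ℕ → S → ℝ
  | 0 => μ
  | (t + 1) => fun s' => ∑ s, ∑ a, stateDist T π μ t s * π s a * T s a s'

/-- Dirac initial distribution at `s` (requires decidable equality). -/
noncomputable def diracDist [DecidableEq S] (s : S) : S → ℝ :=
  fun s' => if s' = s then 1 else 0

/-- Value function `V^π_M(s)`: expected discounted return of policy `π` under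
kernel `T` and reward `R`, started from state `s`. -/
noncomputable def valueFn [DecidableEq S] (T : S → A → S → ℝ) (R : S → A → ℝ)
    (γ : ℝ) (π : S → A → ℝ) (s : S) : ℝ :=
  ∑' t : ℕ, γ ^ t * ∑ s', ∑ a, stateDist T π (diracDist s) t s' * π s' a * R s' a

/-- Expected discounted return `η_M(π)` from initial distribution `μ₀`. -/
noncomputable def expReturn [DecidableEq S] (T : S → A → S → ℝ) (R : S → A → ℝ)
    (γ : ℝ) (π : S → A → ℝ) (μ₀ : S → ℝ) : ℝ :=
  ∑ s, μ₀ s * valueFn T R γ π s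

/-- Discounted state-action occupancy `ρ_T^π(s,a) = ∑_t γ^t P(s_t = s, a_t = a)`. -/
noncomputable def occupancy (T : S → A → S → ℝ) (π : S → A → ℝ)
    (μ₀ : S → ℝ) (γ : ℝ) (s : S) (a : A) : ℝ :=
  ∑' t : ℕ, γ ^ t * stateDist T π μ₀ t s * π s a

/-! Write `P`, `P̂` for the state-transition matrices of `π` under `T`, `T̂`, and `r`, `r̂` for
the `π`-averaged rewards, so that `V = ∑ₜ γᵗ Pᵗ r` satisfies the Bellman equation
`V = r + γ P V`. Averaging `G` over `π` then gives `r̂ + γ P̂ V - V`, and with `dₜ = μ₀ P̂ᵗ`,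
`γᵗ ⟪dₜ, r̂ + γ P̂ V - V⟫ = γᵗ ⟪dₜ, r̂⟫ + (γᵗ⁺¹ ⟪dₜ₊₁, V⟫ - γᵗ ⟪dₜ, V⟫)`.
Summed over `t`, the first terms give `η_M̂(π)` and the rest telescopes to `-⟪μ₀, V⟫ = -η_M(π)`.
All series converge absolutely since the powers of a row-stochastic matrix have entries in
`[0, 1]`. -/

open Matrix

section DiscountedSeries

variable {γ : ℝ}

lemma summable_pow_mul_of_abs_le (hγ0 : 0 ≤ γ) (hγ1 : γ < 1) {x : ℕ → ℝ} {C : ℝ}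
    (hx : ∀ t, |x t| ≤ C) : Summable fun t => γ ^ t * x t :=
  Summable.of_norm_bounded ((summable_geometric_of_lt_one hγ0 hγ1).mul_right C) fun t => by
    rw [norm_mul, norm_pow, Real.norm_of_nonneg hγ0, Real.norm_eq_abs]
    exact mul_le_mul_of_nonneg_left (hx t) (pow_nonneg hγ0 t)

lemma hasSum_pow_mul_telescope {x : ℕ → ℝ} {X : ℝ} (hx : HasSum (fun t => γ ^ t * x t) X) :
    HasSum (fun t => γ ^ t * (γ * x (t + 1) - x t)) (-x 0) := by
  have hshift := (hasSum_nat_add_iff' 1).2 hx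
  simp only [range_one, sum_singleton, pow_zero, one_mul] at hshift
  have := hshift.sub hx
  rw [sub_sub_cancel_left] at this
  exact this.congr_fun fun t => by ring

end DiscountedSeries

section MarkovRewardProcess

variable {n : Type*} [Fintype n]

lemma abs_dotProduct_le_sum_abs {u v : n → ℝ} (hu : ∀ i, |u i| ≤ 1) :
    |u ⬝ᵥ v| ≤ ∑ i, |v i| :=
  calc |u ⬝ᵥ v| ≤ ∑ i, |u i * v i| := abs_sum_le_sum_abs _ _
    _ ≤ ∑ i, |v i| := sum_le_sum fun i _ => by
        rw [abs_mul]; exact mul_le_of_le_one_left (abs_nonneg _) (hu i)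

lemma hasSum_dotProduct {w : ℕ → n → ℝ} {W : n → ℝ} (hw : ∀ i, HasSum (fun t => w t i) (W i))
    (v : n → ℝ) : HasSum (fun t => v ⬝ᵥ w t) (v ⬝ᵥ W) :=
  hasSum_sum fun i _ => (hw i).mul_left (v i)

variable [DecidableEq n] {P : Matrix n n ℝ} {γ : ℝ}

noncomputable def discountedValue (P : Matrix n n ℝ) (γ : ℝ) (r : n → ℝ) (i : n) : ℝ :=
  ∑' t : ℕ, γ ^ t * (P ^ t *ᵥ r) i

lemma abs_le_one_of_mem_rowStochastic {M : Matrix n n ℝ} (hM : M ∈ rowStochastic ℝ n)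
    (i j : n) : |M i j| ≤ 1 :=
  abs_le.2 ⟨by linarith [nonneg_of_mem_rowStochastic hM (i := i) (j := j)],
    le_one_of_mem_rowStochastic hM⟩

lemma summable_pow_mul_vecMul_pow (hP : P ∈ rowStochastic ℝ n) (hγ0 : 0 ≤ γ) (hγ1 : γ < 1)
    (μ : n → ℝ) (j : n) : Summable fun t => γ ^ t * (μ ᵥ* P ^ t) j :=
  summable_pow_mul_of_abs_le hγ0 hγ1 fun t => by
    rw [vecMul, dotProduct_comm]
    exact abs_dotProduct_le_sum_abs fun i => abs_le_one_of_mem_rowStochastic (pow_mem hP t) i j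

lemma hasSum_discountedValue (hP : P ∈ rowStochastic ℝ n) (hγ0 : 0 ≤ γ) (hγ1 : γ < 1)
    (r : n → ℝ) (i : n) :
    HasSum (fun t => γ ^ t * (P ^ t *ᵥ r) i) (discountedValue P γ r i) :=
  (summable_pow_mul_of_abs_le hγ0 hγ1 fun t =>
    abs_dotProduct_le_sum_abs fun j => abs_le_one_of_mem_rowStochastic (pow_mem hP t) i j).hasSum

lemma hasSum_vecMul_pow_dotProduct (hP : P ∈ rowStochastic ℝ n) (hγ0 : 0 ≤ γ) (hγ1 : γ < 1)
    (μ r : n → ℝ) :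
    HasSum (fun t => γ ^ t * ((μ ᵥ* P ^ t) ⬝ᵥ r)) (μ ⬝ᵥ discountedValue P γ r) := by
  convert hasSum_dotProduct (hasSum_discountedValue hP hγ0 hγ1 r) μ using 2 with t
  rw [← dotProduct_mulVec, dotProduct, dotProduct, mul_sum]
  exact sum_congr rfl fun i _ => by ring

lemma discountedValue_eq_add (hP : P ∈ rowStochastic ℝ n) (hγ0 : 0 ≤ γ) (hγ1 : γ < 1)
    (r : n → ℝ) : discountedValue P γ r = r + γ • (P *ᵥ discountedValue P γ r) := by
  funext i
  have hshift := (hasSum_nat_add_iff' 1).2 (hasSum_discountedValue hP hγ0 hγ1 r i)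
  have hrow := (hasSum_vecMul_pow_dotProduct hP hγ0 hγ1 (P i) r).mul_left γ
  simp only [range_one, sum_singleton, pow_zero, one_mul, one_mulVec] at hshift
  have htail : discountedValue P γ r i - r i = γ * (P *ᵥ discountedValue P γ r) i := by
    refine hshift.unique (hrow.congr_fun fun t => ?_)
    change γ ^ (t + 1) * ((P ^ (t + 1)) i ⬝ᵥ r) = _
    rw [pow_succ' P, mul_apply_eq_vecMul, pow_succ]
    ring
  simp only [Pi.add_apply, Pi.smul_apply, smul_eq_mul, ← htail]
  ring

end MarkovRewardProcess

def policyKernel (T : S → A → S → ℝ) (π : S → A → ℝ) : Matrix S S ℝ :=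
  Matrix.of fun s s' => ∑ a, π s a * T s a s'

def policyReward (π : S → A → ℝ) (R : S → A → ℝ) (s : S) : ℝ :=
  ∑ a, π s a * R s a

lemma policyKernel_mem_rowStochastic [DecidableEq S] {T : S → A → S → ℝ} {π : S → A → ℝ}
    (hT0 : ∀ s a s', 0 ≤ T s a s') (hT1 : ∀ s a, ∑ s', T s a s' = 1)
    (hπ0 : ∀ s a, 0 ≤ π s a) (hπ1 : ∀ s, ∑ a, π s a = 1) :
    policyKernel T π ∈ rowStochastic ℝ S := by
  refine mem_rowStochastic_iff_sum.2 ⟨fun s s' => sum_nonneg fun a _ =>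
    mul_nonneg (hπ0 s a) (hT0 s a s'), fun s => ?_⟩
  simp only [policyKernel, of_apply]
  rw [sum_comm]
  simp only [← mul_sum, hT1, mul_one, hπ1]

lemma policyReward_sum_mul (π : S → A → ℝ) (T : S → A → S → ℝ) (v : S → ℝ) :
    policyReward π (fun s a => ∑ s', T s a s' * v s') = policyKernel T π *ᵥ v := by
  funext s
  simp only [policyReward, policyKernel, mulVec, dotProduct, of_apply, mul_sum, sum_mul]
  rw [sum_comm]
  exact sum_congr rfl fun _ _ => sum_congr rfl fun _ _ => by ring

lemma sum_sum_mul_policy (π : S → A → ℝ) (d : S → ℝ) (f : S → A → ℝ) :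
    ∑ s, ∑ a, d s * π s a * f s a = d ⬝ᵥ policyReward π f := by
  simp only [dotProduct, policyReward, mul_sum, mul_assoc]

lemma stateDist_eq_vecMul_pow [DecidableEq S] (T : S → A → S → ℝ) (π : S → A → ℝ) (μ : S → ℝ)
    (t : ℕ) :
    stateDist T π μ t = μ ᵥ* policyKernel T π ^ t := by
  induction t with
  | zero => rw [pow_zero, vecMul_one]; rfl
  | succ t ih =>
    funext s'
    rw [pow_succ, ← vecMul_vecMul, ← ih]
    simp only [stateDist, vecMul, dotProduct, policyKernel, of_apply, mul_sum, mul_assoc]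

omit [Fintype S] in
lemma diracDist_eq_single [DecidableEq S] (s : S) : diracDist s = Pi.single s 1 := by
  funext s'
  simp [diracDist, Pi.single_apply]

lemma valueFn_eq_discountedValue [DecidableEq S] (T : S → A → S → ℝ) (R : S → A → ℝ) (γ : ℝ)
    (π : S → A → ℝ) :
    valueFn T R γ π = discountedValue (policyKernel T π) γ (policyReward π R) := by
  funext s
  refine tsum_congr fun t => ?_
  rw [sum_sum_mul_policy, stateDist_eq_vecMul_pow, ← dotProduct_mulVec, diracDist_eq_single,
    single_one_dotProduct]

lemma expReturn_eq_dotProduct [DecidableEq S] (T : S → A → S → ℝ) (R : S → A → ℝ) (γ : ℝ)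
    (π : S → A → ℝ) (μ₀ : S → ℝ) :
    expReturn T R γ π μ₀ = μ₀ ⬝ᵥ discountedValue (policyKernel T π) γ (policyReward π R) := by
  rw [expReturn, valueFn_eq_discountedValue]
  rfl

lemma hasSum_sum_occupancy_mul [DecidableEq S] {T : S → A → S → ℝ} {π : S → A → ℝ} {γ : ℝ}
    (hP : policyKernel T π ∈ rowStochastic ℝ S) (hγ0 : 0 ≤ γ) (hγ1 : γ < 1)
    (μ : S → ℝ) (g : S → A → ℝ) :
    HasSum (fun t => γ ^ t * ((μ ᵥ* policyKernel T π ^ t) ⬝ᵥ policyReward π g))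
      (∑ s, ∑ a, occupancy T π μ γ s a * g s a) := by
  have hsa : ∀ s a, HasSum (fun t => γ ^ t * (μ ᵥ* policyKernel T π ^ t) s * π s a * g s a)
      (occupancy T π μ γ s a * g s a) := by
    intro s a
    simp only [occupancy, stateDist_eq_vecMul_pow, tsum_mul_right]
    exact (((summable_pow_mul_vecMul_pow hP hγ0 hγ1 μ s).hasSum).mul_right _).mul_right _
  refine (hasSum_sum fun s _ => hasSum_sum fun a _ => hsa s a).congr_fun fun t => ?_
  rw [← sum_sum_mul_policy, mul_sum]
  exact sum_congr rfl fun s _ => by rw [mul_sum]; exact sum_congr rfl fun a _ => by ring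

lemma policyReward_eq_of_eq_sub {T That : S → A → S → ℝ} {R Rhat G : S → A → ℝ}
    {π : S → A → ℝ} {v : S → ℝ}
    (hG : ∀ s a, G s a
      = (∑ s', That s a s' * v s') + Rhat s a - (∑ s', T s a s' * v s') - R s a) :
    policyReward π G = policyKernel That π *ᵥ v + policyReward π Rhat
      - (policyKernel T π *ᵥ v + policyReward π R) := by
  rw [← policyReward_sum_mul, ← policyReward_sum_mul]
  funext s
  simp only [policyReward, hG, Pi.add_apply, Pi.sub_apply, mul_add, mul_sub, sum_add_distrib,
    sum_sub_distrib]
  ring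

theorem telescoping_lemma_general [DecidableEq S]
    (T That : S → A → S → ℝ) (R Rhat : S → A → ℝ)
    (γ : ℝ) (hγ0 : 0 ≤ γ) (hγ1 : γ < 1)
    (π : S → A → ℝ) (μ₀ : S → ℝ)
    (hT0 : ∀ s a s', 0 ≤ T s a s') (hT1 : ∀ s a, ∑ s', T s a s' = 1)
    (hThat0 : ∀ s a s', 0 ≤ That s a s') (hThat1 : ∀ s a, ∑ s', That s a s' = 1)
    (hπ0 : ∀ s a, 0 ≤ π s a) (hπ1 : ∀ s, ∑ a, π s a = 1)
    (G : S → A → ℝ)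
    (hG : ∀ s a, G s a
      = (∑ s', That s a s' * (γ * valueFn T R γ π s')) + Rhat s a
        - (∑ s', T s a s' * (γ * valueFn T R γ π s')) - R s a) :
    (∑ s, ∑ a, occupancy That π μ₀ γ s a * G s a)
      = expReturn That Rhat γ π μ₀ - expReturn T R γ π μ₀ := by
  set P := policyKernel T π
  set Phat := policyKernel That π
  set V := discountedValue P γ (policyReward π R)
  have hP : P ∈ rowStochastic ℝ S := policyKernel_mem_rowStochastic hT0 hT1 hπ0 hπ1
  have hPhat : Phat ∈ rowStochastic ℝ S := policyKernel_mem_rowStochastic hThat0 hThat1 hπ0 hπ1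
  have hGπ : policyReward π G = policyReward π Rhat + γ • (Phat *ᵥ V) - V := by
    rw [valueFn_eq_discountedValue] at hG
    rw [policyReward_eq_of_eq_sub (v := γ • V) hG, mulVec_smul, mulVec_smul,
      add_comm (γ • (P *ᵥ V)), ← discountedValue_eq_add hP hγ0 hγ1]
    abel
  have hstep : ∀ t, γ ^ t * ((μ₀ ᵥ* Phat ^ t) ⬝ᵥ policyReward π G)
      = γ ^ t * ((μ₀ ᵥ* Phat ^ t) ⬝ᵥ policyReward π Rhat)
        + γ ^ t * (γ * ((μ₀ ᵥ* Phat ^ (t + 1)) ⬝ᵥ V) - (μ₀ ᵥ* Phat ^ t) ⬝ᵥ V) := fun t => by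
    rw [hGπ, dotProduct_sub, dotProduct_add, dotProduct_smul, dotProduct_mulVec, vecMul_vecMul,
      ← pow_succ, smul_eq_mul]
    ring
  have hsum := (hasSum_vecMul_pow_dotProduct hPhat hγ0 hγ1 μ₀ (policyReward π Rhat)).add
    (hasSum_pow_mul_telescope (hasSum_vecMul_pow_dotProduct hPhat hγ0 hγ1 μ₀ V))
  rw [pow_zero, vecMul_one, ← sub_eq_add_neg] at hsum
  rw [expReturn_eq_dotProduct, expReturn_eq_dotProduct]
  exact (hasSum_sum_occupancy_mul hPhat hγ0 hγ1 μ₀ G).unique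
    (hsum.congr_fun hstep)

/-- Telescoping lemma (finite-state version). For MDPs `M = (T,R)`
and `M̂ = (T̂,R̂)` sharing `S`, `A`, `γ` and initial distribution `μ₀`, and the
mismatch `G(s,a) = E_{s'∼T̂}[γ V_M^π(s')] + R̂(s,a) − E_{s'∼T}[γ V_M^π(s')] − R(s,a)`,
we have `E_{(s,a)∼ρ_{T̂}^π}[G] = η_{M̂}(π) − η_M(π)`. -/
theorem telescoping_lemma [DecidableEq S] [Nonempty S] [Nonempty A]
    (T That : S → A → S → ℝ) (R Rhat : S → A → ℝ)
    (γ : ℝ) (hγ0 : 0 ≤ γ) (hγ1 : γ < 1)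
    (π : S → A → ℝ) (μ₀ : S → ℝ)
    (hT0 : ∀ s a s', 0 ≤ T s a s') (hT1 : ∀ s a, ∑ s', T s a s' = 1)
    (hThat0 : ∀ s a s', 0 ≤ That s a s') (hThat1 : ∀ s a, ∑ s', That s a s' = 1)
    (hπ0 : ∀ s a, 0 ≤ π s a) (hπ1 : ∀ s, ∑ a, π s a = 1)
    (hμ0 : ∀ s, 0 ≤ μ₀ s) (hμ1 : ∑ s, μ₀ s = 1)
    (G : S → A → ℝ)
    (hG : ∀ s a, G s a
      = (∑ s', That s a s' * (γ * valueFn T R γ π s')) + Rhat s a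
        - (∑ s', T s a s' * (γ * valueFn T R γ π s')) - R s a) :
    (∑ s, ∑ a, occupancy That π μ₀ γ s a * G s a)
      = expReturn That Rhat γ π μ₀ - expReturn T R γ π μ₀ :=
  telescoping_lemma_general T That R Rhat γ hγ0 hγ1 π μ₀ hT0 hT1 hThat0 hThat1 hπ0 hπ1 G hG
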